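/- Let c > 0 and consider the system on X = ℝ² given by A(n)(x₁,x₂) = (c a_n x₁, x₂/c), where a_n = e^{n(1+2^n)} if n is even and a_n = e^{−(n+1)(1+2^{n+1})} if n is odd, with projections P(n)(x₁,x₂) = (x₁,0). Then the system is not P-exponentially dichotomic: there do not exist constants N ≥ 1, α > 0 and β ≥ 0 such that e^{α(m−n)}(‖𝒜_P(m,n)x‖ + ‖Q(n)x‖) ≤ N(e^{βn}‖P(n)x‖ + e^{βm}‖𝒜_Q(m,n)x‖) for all m ≥ n and all x ∈ ℝ². -/

import Mathlib

/-!
Testing the dichotomy inequality on `x = (1, 0)`, which lies in the range of every `P(n)`, bounds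
the one-step growth `c a(n+1)` by `N e^{βn}`. But for odd `n`, `a(n+1) = e^{(n+1)(1+2^{n+1})}`
grows faster than any exponential.
-/

open Real

/-- The evolution operator started at time `n`, after `k` steps:
`A(n+k) ⋯ A(n+1)`. -/
noncomputable def evolFrom {X : Type*} [NormedAddCommGroup X] [NormedSpace ℝ X]
    (A : ℕ → X →L[ℝ] X) (n : ℕ) : ℕ → X →L[ℝ] X
  | 0 => 1
  | k + 1 => (A (n + k + 1)).comp (evolFrom A n k)

/-- The evolution operator `𝒜(m,n) = A(m) ⋯ A(n+1)` for `m ≥ n`, `𝒜(n,n) = I`. -/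
noncomputable def evol {X : Type*} [NormedAddCommGroup X] [NormedSpace ℝ X]
    (A : ℕ → X →L[ℝ] X) (m n : ℕ) : X →L[ℝ] X :=
  evolFrom A n (m - n)

/-- `𝒜_P(m,n) = 𝒜(m,n) P(n)`. -/
noncomputable def evolP {X : Type*} [NormedAddCommGroup X] [NormedSpace ℝ X]
    (A P : ℕ → X →L[ℝ] X) (m n : ℕ) : X →L[ℝ] X :=
  (evol A m n).comp (P n)

/-- `𝒜_Q(m,n) = 𝒜(m,n) Q(n)` where `Q(n) = I - P(n)`. -/
noncomputable def evolQ {X : Type*} [NormedAddCommGroup X] [NormedSpace ℝ X]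
    (A P : ℕ → X →L[ℝ] X) (m n : ℕ) : X →L[ℝ] X :=
  (evol A m n).comp (1 - P n)

/-- The system is P-exponentially dichotomic. -/
def IsED {X : Type*} [NormedAddCommGroup X] [NormedSpace ℝ X]
    (A P : ℕ → X →L[ℝ] X) : Prop :=
  ∃ N α β : ℝ, 1 ≤ N ∧ 0 < α ∧ 0 ≤ β ∧
    ∀ m n : ℕ, n ≤ m → ∀ x : X,
      exp (α * ((m : ℝ) - n)) * (‖evolP A P m n x‖ + ‖(1 - P n) x‖) ≤
        N * (exp (β * n) * ‖P n x‖ + exp (β * m) * ‖evolQ A P m n x‖)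

/-- The diagonal operator `(x₁, x₂) ↦ (u x₁, v x₂)` on `ℝ²`. -/
noncomputable def diagCLM (u v : ℝ) : ℝ × ℝ →L[ℝ] ℝ × ℝ :=
  (u • ContinuousLinearMap.fst ℝ ℝ ℝ).prod (v • ContinuousLinearMap.snd ℝ ℝ ℝ)

/-- The family of projections `P(n)(x₁, x₂) = (x₁, 0)` on `ℝ²`. -/
noncomputable def projFst : ℕ → (ℝ × ℝ →L[ℝ] ℝ × ℝ) :=
  fun _ => (ContinuousLinearMap.fst ℝ ℝ ℝ).prod 0

section Evolution

variable {X : Type*} [NormedAddCommGroup X] [NormedSpace ℝ X] {A P : ℕ → X →L[ℝ] X}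

theorem evol_succ_self (A : ℕ → X →L[ℝ] X) (n : ℕ) : evol A (n + 1) n = A (n + 1) := by
  simp [evol, evolFrom, ContinuousLinearMap.one_def]

theorem IsED.exists_norm_evol_le_of_apply_eq (h : IsED A P) :
    ∃ N β : ℝ, 0 < N ∧ ∀ m n : ℕ, n ≤ m → ∀ x : X, P n x = x →
      ‖evol A m n x‖ ≤ N * exp (β * n) * ‖x‖ := by
  obtain ⟨N, α, β, hN, hα, -, hED⟩ := h
  refine ⟨N, β, by linarith, fun m n hnm x hx => ?_⟩
  have hQx : (1 - P n) x = 0 := by simp [hx]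
  have hbound := hED m n hnm x
  simp only [evolP, evolQ, ContinuousLinearMap.comp_apply, hx, hQx, map_zero, norm_zero,
    add_zero, mul_zero] at hbound
  have hgrowth : 1 ≤ exp (α * ((m : ℝ) - n)) :=
    one_le_exp (mul_nonneg hα.le (sub_nonneg.mpr (by exact_mod_cast hnm)))
  calc ‖evol A m n x‖ ≤ exp (α * ((m : ℝ) - n)) * ‖evol A m n x‖ :=
        le_mul_of_one_le_left (norm_nonneg _) hgrowth
    _ ≤ N * exp (β * n) * ‖x‖ := by linarith

end Evolution

theorem diagCLM_apply (u v : ℝ) (x : ℝ × ℝ) : diagCLM u v x = (u * x.1, v * x.2) := rfl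

theorem exists_odd_lt_mul_one_add_two_pow (L β : ℝ) :
    ∃ n : ℕ, Odd n ∧ L + β * n < (n + 1) * (1 + 2 ^ (n + 1)) := by
  set n := 2 * ⌈|L| + |β|⌉₊ + 1
  have hn_ge : |L| + |β| ≤ n := by
    have := Nat.le_ceil (|L| + |β|)
    simp only [n]; push_cast; linarith
  have hn_one : (1 : ℝ) ≤ n := by exact_mod_cast Nat.le_add_left 1 _
  have hpow : (n : ℝ) + 1 < 2 ^ (n + 1) := by exact_mod_cast Nat.lt_two_pow_self
  refine ⟨n, odd_two_mul_add_one _, ?_⟩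
  nlinarith [le_abs_self L, le_abs_self β, abs_nonneg L, abs_nonneg β, neg_abs_le β]

/-- Example: the system `A(n)(x₁,x₂) = (c aₙ x₁, x₂/c)` is not
P-exponentially dichotomic. -/
theorem example_not_exponential_dichotomy
    (c : ℝ) (hc : 0 < c)
    (a : ℕ → ℝ)
    (ha : ∀ n, a n = if Even n then exp ((n : ℝ) * (1 + 2 ^ n))
      else exp (-(((n : ℝ) + 1) * (1 + 2 ^ (n + 1)))))
    (A : ℕ → ℝ × ℝ →L[ℝ] ℝ × ℝ) (hA : ∀ n, A n = diagCLM (c * a n) c⁻¹) :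
    ¬ IsED A projFst := by
  intro hED
  obtain ⟨N, β, hN, hbound⟩ := hED.exists_norm_evol_le_of_apply_eq
  obtain ⟨n, hn_odd, hn⟩ := exists_odd_lt_mul_one_add_two_pow (log (N / c)) β
  have ha_succ : a (n + 1) = exp ((n + 1) * (1 + 2 ^ (n + 1))) := by
    rw [ha, if_pos hn_odd.add_one]; push_cast; rfl
  have hstep : c * a (n + 1) ≤ N * exp (β * n) := by
    have hpos : 0 < c * a (n + 1) := mul_pos hc (ha_succ ▸ exp_pos _)
    simpa only [evol_succ_self, hA, diagCLM_apply, Prod.norm_mk, mul_one, mul_zero, norm_one,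
      norm_zero, Real.norm_of_nonneg hpos.le, max_eq_left hpos.le, max_eq_left zero_le_one]
      using hbound (n + 1) n n.le_succ (1, 0) rfl
  have hgrowth : N * exp (β * n) < c * a (n + 1) := by
    calc N * exp (β * n) = c * exp (log (N / c) + β * n) := by
          rw [exp_add, exp_log (div_pos hN hc)]; field_simp
      _ < c * a (n + 1) := by rw [ha_succ]; gcongr
  exact hgrowth.not_ge hstep
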